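/- Let K_0 be the graph obtained from K_{2,4} by adding one edge between two of the four vertices on the larger side. Then γ(K_0) = 1, and the subgraphs H ⊆ K_0 with minimum degree at least 2 and e(H) − v(H) = γ(K_0)·c(H), together with the empty graph, are exactly: the empty graph, K_{2,4}, and K_0 itself. -/

import Mathlib

open Finset

variable {V : Type*}

/-- Sum of edge weights over all edges containing vertex `v`. -/
def vertexDegSum [Fintype V] [DecidableEq V] (w : Sym2 V → ℝ) (v : V) : ℝ :=
  ∑ e ∈ Finset.univ.filter (fun e : Sym2 V => v ∈ e), w e

/-- Total weight of an edge weighting. -/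
def edgeTotal [Fintype V] [DecidableEq V] (w : Sym2 V → ℝ) : ℝ :=
  ∑ e : Sym2 V, w e

/-- A fractional matching of `G`. -/
def IsFracMatching [Fintype V] [DecidableEq V] (G : SimpleGraph V) (w : Sym2 V → ℝ) : Prop :=
  (∀ e, 0 ≤ w e) ∧ (∀ e, e ∉ G.edgeSet → w e = 0) ∧ ∀ v, vertexDegSum w v ≤ 1

/-- A fractional edge cover of `G`. -/
def IsFracEdgeCover [Fintype V] [DecidableEq V] (G : SimpleGraph V) (w : Sym2 V → ℝ) : Prop :=
  (∀ e, 0 ≤ w e) ∧ (∀ e, e ∉ G.edgeSet → w e = 0) ∧ ∀ v, 1 ≤ vertexDegSum w v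

/-- A maximum fractional matching. -/
def IsMaxFracMatching [Fintype V] [DecidableEq V] (G : SimpleGraph V) (w : Sym2 V → ℝ) : Prop :=
  IsFracMatching G w ∧ ∀ w', IsFracMatching G w' → edgeTotal w' ≤ edgeTotal w

/-- A minimum fractional edge cover. -/
def IsMinFracEdgeCover [Fintype V] [DecidableEq V] (G : SimpleGraph V) (w : Sym2 V → ℝ) : Prop :=
  IsFracEdgeCover G w ∧ ∀ w', IsFracEdgeCover G w' → edgeTotal w ≤ edgeTotal w'

/-- A fractional vertex cover of `G`. -/
def IsFracCover (G : SimpleGraph V) (c : V → ℝ) : Prop :=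
  (∀ v, 0 ≤ c v) ∧ ∀ u v, G.Adj u v → 1 ≤ c u + c v

/-- Total weight of a vertex weighting. -/
def coverTotal [Fintype V] (c : V → ℝ) : ℝ := ∑ v, c v

/-- A minimum fractional vertex cover. -/
def IsMinFracCover [Fintype V] (G : SimpleGraph V) (c : V → ℝ) : Prop :=
  IsFracCover G c ∧ ∀ c', IsFracCover G c' → coverTotal c ≤ coverTotal c'

/-- An edge is bad if it has weight 1 in every maximum fractional matching. -/
def IsBadEdge [Fintype V] [DecidableEq V] (G : SimpleGraph V) (e : Sym2 V) : Prop :=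
  ∀ w, IsMaxFracMatching G w → w e = 1

/-- Number of non-isolated vertices of the subgraph given by the edge set S. -/
def suppCard [Fintype V] [DecidableEq V] (S : Finset (Sym2 V)) : ℕ :=
  (Finset.univ.filter (fun v : V => ∃ e ∈ S, v ∈ e)).card

/-- Degree of v in the subgraph given by the edge set S. -/
def degIn [DecidableEq V] (S : Finset (Sym2 V)) (v : V) : ℕ :=
  (S.filter (fun e => v ∈ e)).card

/-- Edge set of K_0 = K_{2,4} plus an edge: vertices 0,1 on the small side,
vertices 2,3,4,5 on the large side, extra edge 2-3. -/
def K0edges : Finset (Sym2 (Fin 6)) :=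
  {s(0, 2), s(0, 3), s(0, 4), s(0, 5), s(1, 2), s(1, 3), s(1, 4), s(1, 5), s(2, 3)}

/-- Edge set of the K_{2,4} subgraph of K_0. -/
def K24edges : Finset (Sym2 (Fin 6)) :=
  {s(0, 2), s(0, 3), s(0, 4), s(0, 5), s(1, 2), s(1, 3), s(1, 4), s(1, 5)}

/-!
A half-integral fractional matching, i.e. a multiset of edges meeting each vertex at most twice
with every copy weighted `1/2`, bounds every fractional vertex cover from below (LP weak duality).
So `c(H) ≥ e(H) - v(H)` for a subgraph `H ⊆ K_0` is certified by such a multiset inside `H` of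
size at least `2 (e(H) - v(H))`, and the strict inequality by one of larger size. `K_0` has only
`2 ^ 9` subgraphs, and eight multisets, found by computer search, provide all these certificates.
Equality for `K_{2,4}` and `K_0` comes from the vertex covers `{0, 1}` and `{0, 1, 2}`, matched by
the half-integral matchings `2 · {04, 15}` and `2 · {04, 15, 23}`.
-/

section FractionalCovers

variable [DecidableEq V]

theorem isFracCover_fromEdgeSet_indicator {S : Finset (Sym2 V)} {C : Finset V}
    (hC : ∀ e ∈ S, ∃ v ∈ C, v ∈ e) :
    IsFracCover (SimpleGraph.fromEdgeSet (↑S : Set (Sym2 V)))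
      (fun v => if v ∈ C then 1 else 0) := by
  have hnonneg : ∀ u, (0 : ℝ) ≤ if u ∈ C then 1 else 0 := fun u => by positivity
  refine ⟨hnonneg, fun a b hab => ?_⟩
  obtain ⟨v, hvC, hv⟩ := hC _ ((SimpleGraph.fromEdgeSet_adj _).1 hab).1
  rcases Sym2.mem_iff.1 hv with rfl | rfl
  · simp only [hvC, if_true]
    linarith [hnonneg b]
  · simp only [hvC, if_true]
    linarith [hnonneg a]

variable [Fintype V] {G : SimpleGraph V}

theorem IsFracMatching.edgeTotal_le_coverTotal {w : Sym2 V → ℝ} {c : V → ℝ}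
    (hw : IsFracMatching G w) (hc : IsFracCover G c) : edgeTotal w ≤ coverTotal c := by
  obtain ⟨hw_nonneg, hw_edge, hw_deg⟩ := hw
  obtain ⟨hc_nonneg, hc_adj⟩ := hc
  have edge_le : ∀ e, w e ≤ ∑ v ∈ univ.filter (· ∈ e), w e * c v := by
    intro e
    induction e using Sym2.ind with
    | _ a b =>
      by_cases hab : s(a, b) ∈ G.edgeSet
      · have hadj : G.Adj a b := hab
        have hends : univ.filter (· ∈ s(a, b)) = {a, b} := by ext; simp
        rw [hends, sum_pair hadj.ne, ← mul_add]
        exact le_mul_of_one_le_right (hw_nonneg _) (hc_adj a b hadj)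
      · simp [hw_edge _ hab]
  calc edgeTotal w ≤ ∑ e, ∑ v ∈ univ.filter (· ∈ e), w e * c v := sum_le_sum fun e _ => edge_le e
    _ = ∑ v, ∑ e ∈ univ.filter (v ∈ ·), w e * c v := sum_comm' (by simp)
    _ = ∑ v, c v * vertexDegSum w v := by simp only [vertexDegSum, mul_sum, mul_comm]
    _ ≤ coverTotal c := sum_le_sum fun v _ => mul_le_of_le_one_right (hc_nonneg v) (hw_deg v)

theorem IsFracCover.isMinFracCover_of_coverTotal_le {c : V → ℝ} {w : Sym2 V → ℝ}
    (hc : IsFracCover G c) (hw : IsFracMatching G w) (h : coverTotal c ≤ edgeTotal w) :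
    IsMinFracCover G c :=
  ⟨hc, fun _ hc' => h.trans (hw.edgeTotal_le_coverTotal hc')⟩

noncomputable def halfWeight (M : Multiset (Sym2 V)) (e : Sym2 V) : ℝ := M.count e / 2

theorem sum_halfWeight_filter (M : Multiset (Sym2 V)) (p : Sym2 V → Prop) [DecidablePred p] :
    ∑ e ∈ univ.filter p, halfWeight M e = (M.filter p).card / 2 := by
  simp only [halfWeight, ← sum_div, sum_filter, ← Nat.cast_sum,
    ← Multiset.count_filter, Multiset.sum_count_eq_card fun _ _ => mem_univ _]

theorem edgeTotal_halfWeight (M : Multiset (Sym2 V)) :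
    edgeTotal (halfWeight M) = M.card / 2 := by
  simpa [edgeTotal] using sum_halfWeight_filter M fun _ => True

theorem isFracMatching_halfWeight {M : Multiset (Sym2 V)}
    (hMG : ∀ e ∈ M, e ∈ G.edgeSet) (hdeg : ∀ v, (M.filter (v ∈ ·)).card ≤ 2) :
    IsFracMatching G (halfWeight M) := by
  refine ⟨fun e => by unfold halfWeight; positivity, fun e he => ?_, fun v => ?_⟩
  · simp [halfWeight, Multiset.count_eq_zero.2 fun h => he (hMG e h)]
  · rw [vertexDegSum, sum_halfWeight_filter, div_le_one two_pos]
    exact_mod_cast hdeg v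

theorem coverTotal_indicator (C : Finset V) :
    coverTotal (fun v => if v ∈ C then (1 : ℝ) else 0) = C.card := by
  simp [coverTotal]

theorem exists_isMinFracCover_coverTotal_eq {S : Finset (Sym2 V)} (C : Finset V)
    (M : Multiset (Sym2 V)) (hC : ∀ e ∈ S, ∃ v ∈ C, v ∈ e) (hMS : ∀ e ∈ M, e ∈ S ∧ ¬ e.IsDiag)
    (hdeg : ∀ v, (M.filter (v ∈ ·)).card ≤ 2) (hCM : 2 * C.card = M.card)
    (hexcess : S.card = suppCard S + C.card) :
    ∃ c, IsMinFracCover (SimpleGraph.fromEdgeSet (↑S : Set (Sym2 V))) c ∧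
      (S.card : ℝ) - suppCard S = coverTotal c := by
  have hw : IsFracMatching (SimpleGraph.fromEdgeSet (↑S : Set (Sym2 V))) (halfWeight M) :=
    isFracMatching_halfWeight (fun e he => by simpa using hMS e he) hdeg
  refine ⟨_, (isFracCover_fromEdgeSet_indicator hC).isMinFracCover_of_coverTotal_le hw ?_, ?_⟩
  · rw [coverTotal_indicator, edgeTotal_halfWeight, ← hCM]
    push_cast
    linarith
  · rw [coverTotal_indicator, hexcess]
    push_cast
    ring

end FractionalCovers

def K0HalfMatchings : List (Multiset (Sym2 (Fin 6))) :=
  [0, {s(1, 3), s(1, 3)}, {s(0, 2), s(0, 2)}, {s(0, 2), s(0, 2), s(1, 3), s(1, 3)},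
    {s(0, 4), s(0, 4), s(1, 5), s(1, 5)}, {s(0, 4), s(0, 4), s(1, 5), s(1, 5), s(2, 3), s(2, 3)},
    {s(0, 3), s(0, 5), s(1, 2), s(1, 5), s(2, 3)}, {s(0, 3), s(0, 4), s(1, 2), s(1, 4), s(2, 3)}]

theorem K0HalfMatchings_isHalfMatching : ∀ M ∈ K0HalfMatchings,
    (∀ e ∈ M, ¬ e.IsDiag) ∧ ∀ v, (M.filter (v ∈ ·)).card ≤ 2 := by
  decide

theorem K0HalfMatching_card_div_two_le_coverTotal {S : Finset (Sym2 (Fin 6))}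
    {M : Multiset (Sym2 (Fin 6))} {c : Fin 6 → ℝ} (hM : M ∈ K0HalfMatchings) (hMS : ∀ e ∈ M, e ∈ S)
    (hc : IsFracCover (SimpleGraph.fromEdgeSet (↑S : Set (Sym2 (Fin 6)))) c) :
    (M.card : ℝ) / 2 ≤ coverTotal c := by
  obtain ⟨hdiag, hdeg⟩ := K0HalfMatchings_isHalfMatching M hM
  rw [← edgeTotal_halfWeight]
  exact (isFracMatching_halfWeight (fun e he => by simpa using ⟨hMS e he, hdiag e he⟩) hdeg)
    |>.edgeTotal_le_coverTotal hc

/- The finite checks go through `filter` on `K0edges.powerset`: the kernel evaluates this far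
faster than a bounded quantifier over a `Finset`. -/

theorem exists_K0HalfMatching_excess_le {S : Finset (Sym2 (Fin 6))} (hS : S ⊆ K0edges) :
    ∃ M ∈ K0HalfMatchings, (∀ e ∈ M, e ∈ S) ∧ 2 * S.card ≤ 2 * suppCard S + M.card := by
  have hcheck : K0edges.powerset.filter (fun S => ¬ ∃ M ∈ K0HalfMatchings,
      (∀ e ∈ M, e ∈ S) ∧ 2 * S.card ≤ 2 * suppCard S + M.card) = ∅ := by
    decide +kernel
  simpa using filter_eq_empty_iff.1 hcheck (mem_powerset.2 hS)

theorem exists_K0HalfMatching_excess_lt {S : Finset (Sym2 (Fin 6))} (hS : S ⊆ K0edges)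
    (hdeg : ∀ v, (∃ e ∈ S, v ∈ e) → 2 ≤ degIn S v) (h0 : S ≠ ∅) (h24 : S ≠ K24edges)
    (hK0 : S ≠ K0edges) :
    ∃ M ∈ K0HalfMatchings, (∀ e ∈ M, e ∈ S) ∧ 2 * S.card < 2 * suppCard S + M.card := by
  have hcheck : K0edges.powerset.filter (fun S => (∀ v, (∃ e ∈ S, v ∈ e) → 2 ≤ degIn S v) ∧
      S ≠ ∅ ∧ S ≠ K24edges ∧ S ≠ K0edges ∧ ¬ ∃ M ∈ K0HalfMatchings,
      (∀ e ∈ M, e ∈ S) ∧ 2 * S.card < 2 * suppCard S + M.card) = ∅ := by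
    decide +kernel
  by_contra h
  exact filter_eq_empty_iff.1 hcheck (mem_powerset.2 hS) ⟨hdeg, h0, h24, hK0, h⟩

/-- γ(K_0) = 1: every subgraph H ⊆ K_0 satisfies e(H) - v(H) ≤ c(H), and the
subgraphs of minimum degree ≥ 2 attaining e(H) - v(H) = 1 · c(H), together with the
empty graph, are exactly the empty graph, K_{2,4} and K_0 itself. -/
theorem K0_gamma_eq_one_and_contributing_subgraphs :
    (∀ S : Finset (Sym2 (Fin 6)), S ⊆ K0edges →
      ∀ c : Fin 6 → ℝ, IsMinFracCover (SimpleGraph.fromEdgeSet (↑S : Set (Sym2 (Fin 6)))) c →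
        (S.card : ℝ) - (suppCard S : ℝ) ≤ coverTotal c) ∧
    (∀ S : Finset (Sym2 (Fin 6)), S ⊆ K0edges →
      (∀ v : Fin 6, (∃ e ∈ S, v ∈ e) → 2 ≤ degIn S v) →
      ((∃ c : Fin 6 → ℝ,
          IsMinFracCover (SimpleGraph.fromEdgeSet (↑S : Set (Sym2 (Fin 6)))) c ∧
          (S.card : ℝ) - (suppCard S : ℝ) = coverTotal c) ↔
        (S = ∅ ∨ S = K24edges ∨ S = K0edges))) := by
  refine ⟨fun S hS c hc => ?_, fun S hS hdeg => ⟨fun ⟨c, hc, hexcess⟩ => ?_, ?_⟩⟩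
  · obtain ⟨M, hM, hMS, hcard⟩ := exists_K0HalfMatching_excess_le hS
    have hM_le := K0HalfMatching_card_div_two_le_coverTotal hM hMS hc.1
    have hcard' : (2 * S.card : ℝ) ≤ 2 * suppCard S + M.card := by exact_mod_cast hcard
    linarith
  · by_contra! ⟨h0, h24, hK0⟩
    obtain ⟨M, hM, hMS, hcard⟩ := exists_K0HalfMatching_excess_lt hS hdeg h0.ne_empty h24 hK0
    have hM_le := K0HalfMatching_card_div_two_le_coverTotal hM hMS hc.1
    have hcard' : (2 * S.card : ℝ) < 2 * suppCard S + M.card := by exact_mod_cast hcard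
    linarith
  · rintro (rfl | rfl | rfl)
    · exact exists_isMinFracCover_coverTotal_eq ∅ 0 (by decide) (by decide) (by decide)
        (by decide) (by decide)
    · exact exists_isMinFracCover_coverTotal_eq {0, 1} {s(0, 4), s(0, 4), s(1, 5), s(1, 5)}
        (by decide) (by decide) (by decide) (by decide) (by decide)
    · exact exists_isMinFracCover_coverTotal_eq {0, 1, 2}
        {s(0, 4), s(0, 4), s(1, 5), s(1, 5), s(2, 3), s(2, 3)}
        (by decide) (by decide) (by decide) (by decide) (by decide)
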